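/- arXiv:2507.08581 — 4 statements merged into one kernel-verified Lean document; each statement's English description precedes it below -/
import Mathlib

section
/- Inheritance of inductive expressivity under heterogeneous combination: if Δ⁰ is inductively expressive with function U2ℕ⁰ : U⁰ → ℕ, variable set V_ℕ⁰ and witnessing first-order formulas nat_{>0}, nat_=, nat_{+1}, then there exists a function U2ℕ^het on the universe of the simple heterogeneous theory Δ^⊎ such that Δ^⊎ is inductively expressive with respect to U2ℕ^het and the same variable set V_ℕ⁰, using the same witnessing formulas regarded as formulas of Δ^⊎; the same holds symmetrically when Δ¹ is inductively expressive. -/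
/-- A dynamic theory over variables `V`, first-order atoms `A`, programs `P`,
state space `S` and universe `U`. -/
structure DynamicTheory (V : Type*) (A : Type*) (P : Type*) (S : Type*) (U : Type*) where
  state_nonempty : Nonempty S
  univ_nonempty : Nonempty U
  /-- variable evaluation -/
  val : S → V → U
  /-- interpolation property of the state space -/
  interpolation : ∀ (μ ν : S) (W : Set V), ∃ ω : S,
    (∀ v ∈ W, val ω v = val μ v) ∧ (∀ v ∉ W, val ω v = val ν v)
  /-- atom evaluation -/
  atomEval : A → Set S
  /-- free-variable overapproximation for atoms -/
  fvA : A → Set V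
  fvA_finite : ∀ a : A, (fvA a).Finite
  fvA_overapprox : ∀ (a : A) (μ ν : S),
    (∀ v ∈ fvA a, val μ v = val ν v) → (μ ∈ atomEval a ↔ ν ∈ atomEval a)
  /-- program evaluation -/
  progEval : P → Set (S × S)
  /-- free-variable overapproximation for programs -/
  fvP : P → Set V
  fvP_finite : ∀ p : P, (fvP p).Finite
  progEval_ext : ∀ (p : P) (μ ν ω : S),
    (∀ v : V, val μ v = val ν v) → ((μ, ω) ∈ progEval p ↔ (ν, ω) ∈ progEval p)
  fvP_overapprox : ∀ (p : P) (W : Set V), fvP p ⊆ W →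
    ∀ (μ ν ω : S), (∀ v ∈ W, val μ v = val ν v) → (μ, ω) ∈ progEval p →
      ∃ ω' : S, (ν, ω') ∈ progEval p ∧ ∀ v ∈ W, val ω v = val ω' v

/-- Λ-formulas over variables `V`, atoms `A` and programs `P`. -/
inductive Formula (V : Type*) (A : Type*) (P : Type*) where
  | atom : A → Formula V A P
  | not : Formula V A P → Formula V A P
  | and : Formula V A P → Formula V A P → Formula V A P
  | all : V → Formula V A P → Formula V A P
  | box : P → Formula V A P → Formula V A P

namespace Formula

/-- Semantics of Λ-formulas. -/
def sem {V A P S U : Type*} (val : S → V → U) (aEval : A → Set S)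
    (pEval : P → Set (S × S)) : Formula V A P → Set S
  | atom a => aEval a
  | not F => (sem val aEval pEval F)ᶜ
  | and F G => sem val aEval pEval F ∩ sem val aEval pEval G
  | all v F => {μ : S | ∀ ν : S, (∀ w : V, w ≠ v → val μ w = val ν w) →
      ν ∈ sem val aEval pEval F}
  | box p F => {μ : S | ∀ ν : S, (μ, ν) ∈ pEval p → ν ∈ sem val aEval pEval F}

/-- Implication as the usual abbreviation. -/
def imp {V A P : Type*} (F G : Formula V A P) : Formula V A P := not (and F (not G))

/-- Bi-implication as the usual abbreviation. -/
def iff {V A P : Type*} (F G : Formula V A P) : Formula V A P := and (imp F G) (imp G F)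

/-- The diamond modality `⟨p⟩F = ¬[p]¬F`. -/
def dia {V A P : Type*} (p : P) (F : Formula V A P) : Formula V A P := not (box p (not F))

/-- Existential quantification `∃v F = ¬∀v ¬F`. -/
def exi {V A P : Type*} (v : V) (F : Formula V A P) : Formula V A P := not (all v (not F))

/-- Mapping a formula along renamings of variables, atoms and programs. -/
def map {V A P V' A' P' : Type*} (fv : V → V') (fa : A → A') (fp : P → P') :
    Formula V A P → Formula V' A' P'
  | atom a => atom (fa a)
  | not F => not (map fv fa fp F)
  | and F G => and (map fv fa fp F) (map fv fa fp G)
  | all v F => all (fv v) (map fv fa fp F)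
  | box p F => box (fp p) (map fv fa fp F)

end Formula

/-- Validity: the formula holds in every state. -/
def Valid {V A P S U : Type*} (val : S → V → U) (aEval : A → Set S)
    (pEval : P → Set (S × S)) (F : Formula V A P) : Prop :=
  Formula.sem val aEval pEval F = Set.univ

/-- Semantically free variables of a formula. -/
def fvSemFml {V A P S U : Type*} (val : S → V → U) (aEval : A → Set S)
    (pEval : P → Set (S × S)) (F : Formula V A P) : Set V :=
  {v : V | ∃ μ μ' : S, (∀ w : V, w ≠ v → val μ w = val μ' w) ∧
      μ ∈ Formula.sem val aEval pEval F ∧ μ' ∉ Formula.sem val aEval pEval F}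

/-- Semantically free variables of a program. -/
def fvSemProg {V P S U : Type*} (val : S → V → U) (pEval : P → Set (S × S)) (p : P) : Set V :=
  {v : V | ∃ μ μ' ν : S, (∀ w : V, w ≠ v → val μ w = val μ' w) ∧ (μ, ν) ∈ pEval p ∧
      ¬ ∃ ν' : S, (∀ w : V, w ≠ v → val ν w = val ν' w) ∧ (μ', ν') ∈ pEval p}

/-- Semantically bound variables of a program. -/
def bvSemProg {V P S U : Type*} (val : S → V → U) (pEval : P → Set (S × S)) (p : P) : Set V :=
  {v : V | ∃ μ μ' : S, (μ, μ') ∈ pEval p ∧ val μ v ≠ val μ' v}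

/-- Syntactic free variables of a formula. -/
def fvSyn {V A P : Type*} (fvA : A → Set V) (fvP : P → Set V) : Formula V A P → Set V
  | .atom a => fvA a
  | .not F => fvSyn fvA fvP F
  | .and F G => fvSyn fvA fvP F ∪ fvSyn fvA fvP G
  | .all v F => fvSyn fvA fvP F \ {v}
  | .box p F => fvP p ∪ fvSyn fvA fvP F

/-- First-order (modality-free) formulas are formulas whose programs are drawn from
`Empty`; this is their semantics. -/
def foSem {V A S U : Type*} (val : S → V → U) (aEval : A → Set S)
    (F : Formula V A Empty) : Set S :=
  Formula.sem val aEval (fun e => e.elim) F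

/-- Embedding of first-order formulas into formulas over any program set. -/
def embFO {V A P : Type*} (F : Formula V A Empty) : Formula V A P :=
  Formula.map id id (fun e => e.elim) F

/-- Program evaluation of the havoc lift: original programs keep their behaviour and
`v := *` (encoded as `Sum.inr v`) relates states that agree outside `v`. -/
def havocProgEval {V P S U : Type*} (val : S → V → U) (pEval : P → Set (S × S)) :
    P ⊕ V → Set (S × S)
  | Sum.inl p => pEval p
  | Sum.inr v => {x : S × S | ∀ w : V, w ≠ v → val x.1 w = val x.2 w}

/-- Free-variable overapproximation of the havoc lift. -/
def havocFvP {V P : Type*} (fvP : P → Set V) : P ⊕ V → Set V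
  | Sum.inl p => fvP p
  | Sum.inr _ => ∅

/-- Regular programs over base programs `P`, with tests on first-order formulas. -/
inductive RegProg (V : Type*) (A : Type*) (P : Type*) where
  | base : P → RegProg V A P
  | seq : RegProg V A P → RegProg V A P → RegProg V A P
  | choice : RegProg V A P → RegProg V A P → RegProg V A P
  | test : Formula V A Empty → RegProg V A P
  | star : RegProg V A P → RegProg V A P

/-- Relational composition. -/
def relComp {S : Type*} (R Q : Set (S × S)) : Set (S × S) :=
  {x : S × S | ∃ ν : S, (x.1, ν) ∈ R ∧ (ν, x.2) ∈ Q}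

/-- `n`-fold iteration of a relation, starting from the identity up to variable values. -/
def relIter {V S U : Type*} (val : S → V → U) (R : Set (S × S)) : ℕ → Set (S × S)
  | 0 => {x : S × S | ∀ v : V, val x.1 v = val x.2 v}
  | n + 1 => relComp R (relIter val R n)

/-- Program evaluation of the regular closure. -/
def regProgEval {V A P S U : Type*} (val : S → V → U) (aEval : A → Set S)
    (pEval : P → Set (S × S)) : RegProg V A P → Set (S × S)
  | .base r => pEval r
  | .seq p q => relComp (regProgEval val aEval pEval p) (regProgEval val aEval pEval q)
  | .choice p q => regProgEval val aEval pEval p ∪ regProgEval val aEval pEval q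
  | .test F => {x : S × S | x.1 ∈ foSem val aEval F ∧ ∀ v : V, val x.1 v = val x.2 v}
  | .star p => ⋃ n : ℕ, relIter val (regProgEval val aEval pEval p) n

/-- Free-variable overapproximation of the regular closure. -/
def regFvP {V A P : Type*} (fvA : A → Set V) (fvP : P → Set V) : RegProg V A P → Set V
  | .base r => fvP r
  | .seq p q => regFvP fvA fvP p ∪ regFvP fvA fvP q
  | .choice p q => regFvP fvA fvP p ∪ regFvP fvA fvP q
  | .test F => fvSyn fvA (fun e => e.elim) F
  | .star p => regFvP fvA fvP p

/-- Bound-variable overapproximation of the regular closure. -/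
def regBvP {V A P : Type*} (bvP : P → Set V) : RegProg V A P → Set V
  | .base r => bvP r
  | .seq p q => regBvP bvP p ∪ regBvP bvP q
  | .choice p q => regBvP bvP p ∪ regBvP bvP q
  | .test _ => ∅
  | .star p => regBvP bvP p

/-- The set of values a variable can take. -/
def valueSet {V S U : Type*} (val : S → V → U) (v : V) : Set U :=
  {δ : U | ∃ μ : S, val μ v = δ}

/-- Twin variables: variables with the same value set. -/
def TwinVars {V S U : Type*} (val : S → V → U) (v w : V) : Prop :=
  valueSet val v = valueSet val w

/-- Twin variable vectors: componentwise twins of equal length. -/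
def TwinLists {V S U : Type*} (val : S → V → U) (x xp : List V) : Prop :=
  x.length = xp.length ∧ ∀ q ∈ x.zip xp, TwinVars val q.1 q.2

/-- FOL expressiveness relative to a chosen equality predicate `eq`: infinitely many twin
variables, soundness of the equality predicate on twins, and first-order renditions of all
programs (stated semantically: the rendition is valid-equivalent to `⟨p⟩(x ≐ x⁺)`). -/
def FOLExpressive {V A P S U : Type*} (val : S → V → U) (aEval : A → Set S)
    (pEval : P → Set (S × S)) (eq : V → V → Formula V A Empty) : Prop :=
  (∀ v : V, {w : V | TwinVars val v w}.Infinite) ∧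
  (∀ v w : V, TwinVars val v w →
    ∀ μ : S, μ ∈ foSem val aEval (eq v w) ↔ val μ v = val μ w) ∧
  (∀ (p : P) (x xp : List V), TwinLists val x xp → x.Nodup → xp.Nodup →
    fvSemProg val pEval p ∪ bvSemProg val pEval p ⊆ {v : V | v ∈ x} →
    (∀ v ∈ x, v ∉ xp) →
    ∃ Sp : Formula V A Empty, ∀ μ : S,
      μ ∈ foSem val aEval Sp ↔
        ∃ ν : S, (μ, ν) ∈ pEval p ∧ ∀ q ∈ x.zip xp, val ν q.1 = val ν q.2)

/-- Variable evaluation of the heterogeneous (product) state space. -/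
def hetVal {V0 V1 S0 S1 U0 U1 : Type*} (val0 : S0 → V0 → U0) (val1 : S1 → V1 → U1) :
    S0 × S1 → V0 ⊕ V1 → U0 ⊕ U1 := fun μ v =>
  match v with
  | Sum.inl v => Sum.inl (val0 μ.1 v)
  | Sum.inr v => Sum.inr (val1 μ.2 v)

/-- Atom evaluation of the simple heterogeneous theory. -/
def hetAtomEval {A0 A1 Ac S0 S1 : Type*} (aEval0 : A0 → Set S0) (aEval1 : A1 → Set S1)
    (aEvalC : Ac → Set (S0 × S1)) : A0 ⊕ A1 ⊕ Ac → Set (S0 × S1) := fun a =>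
  match a with
  | Sum.inl a => {μ : S0 × S1 | μ.1 ∈ aEval0 a}
  | Sum.inr (Sum.inl a) => {μ : S0 × S1 | μ.2 ∈ aEval1 a}
  | Sum.inr (Sum.inr a) => aEvalC a

/-- Free variables of atoms of the simple heterogeneous theory. -/
def hetFvA {V0 V1 A0 A1 Ac : Type*} (fvA0 : A0 → Set V0) (fvA1 : A1 → Set V1)
    (fvAC : Ac → Set (V0 ⊕ V1)) : A0 ⊕ A1 ⊕ Ac → Set (V0 ⊕ V1) := fun a =>
  match a with
  | Sum.inl a => Sum.inl '' fvA0 a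
  | Sum.inr (Sum.inl a) => Sum.inr '' fvA1 a
  | Sum.inr (Sum.inr a) => fvAC a

/-- Program evaluation of the simple heterogeneous theory: a program of one component acts
on its component while the other component keeps all its variable values. -/
def hetProgEval {V0 V1 P0 P1 S0 S1 U0 U1 : Type*} (val0 : S0 → V0 → U0)
    (val1 : S1 → V1 → U1) (pEval0 : P0 → Set (S0 × S0)) (pEval1 : P1 → Set (S1 × S1)) :
    P0 ⊕ P1 → Set ((S0 × S1) × (S0 × S1)) := fun p =>
  match p with
  | Sum.inl p => {x | (x.1.1, x.2.1) ∈ pEval0 p ∧ ∀ v : V1, val1 x.1.2 v = val1 x.2.2 v}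
  | Sum.inr p => {x | (x.1.2, x.2.2) ∈ pEval1 p ∧ ∀ v : V0, val0 x.1.1 v = val0 x.2.1 v}

/-- Free variables of programs of the simple heterogeneous theory. -/
def hetFvP {V0 V1 P0 P1 : Type*} (fvP0 : P0 → Set V0) (fvP1 : P1 → Set V1) :
    P0 ⊕ P1 → Set (V0 ⊕ V1) := fun p =>
  match p with
  | Sum.inl p => Sum.inl '' fvP0 p
  | Sum.inr p => Sum.inr '' fvP1 p

lemma hetSem_left {V0 A0 S0 U0 V1 A1 Ac S1 U1 : Type*}
    (val0 : S0 → V0 → U0) (val1 : S1 → V1 → U1)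
    (aEval0 : A0 → Set S0) (aEval1 : A1 → Set S1) (aEvalC : Ac → Set (S0 × S1))
    (F : Formula V0 A0 Empty) (μ : S0 × S1) :
    μ ∈ Formula.sem (hetVal val0 val1) (hetAtomEval aEval0 aEval1 aEvalC)
        (fun e : Empty => e.elim) (Formula.map Sum.inl Sum.inl id F) ↔
      μ.1 ∈ Formula.sem val0 aEval0 (fun e : Empty => e.elim) F := by
  induction F generalizing μ with
  | atom a => rfl
  | not F ih => simp [Formula.map, Formula.sem, ih]
  | and F G ihF ihG => simp [Formula.map, Formula.sem, ihF, ihG]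
  | box p F ih => exact p.elim
  | all v F ih =>
    simp only [Formula.map, Formula.sem, Set.mem_setOf_eq]
    constructor
    · intro h ν0 hν0
      have := h (ν0, μ.2) (by
        rintro (w | w) hw
        · simp only [hetVal]
          exact congrArg Sum.inl (hν0 w (by simpa using hw))
        · rfl)
      exact (ih _).1 this
    · intro h ν hν
      refine (ih ν).2 (h ν.1 ?_)
      intro w hw
      have := hν (Sum.inl w) (by simpa using hw)
      simpa [hetVal] using this

lemma hetSem_right {V0 A0 S0 U0 V1 A1 Ac S1 U1 : Type*}
    (val0 : S0 → V0 → U0) (val1 : S1 → V1 → U1)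
    (aEval0 : A0 → Set S0) (aEval1 : A1 → Set S1) (aEvalC : Ac → Set (S0 × S1))
    (F : Formula V1 A1 Empty) (μ : S0 × S1) :
    μ ∈ Formula.sem (hetVal val0 val1) (hetAtomEval aEval0 aEval1 aEvalC)
        (fun e : Empty => e.elim)
        (Formula.map Sum.inr (fun a => Sum.inr (Sum.inl a)) id F) ↔
      μ.2 ∈ Formula.sem val1 aEval1 (fun e : Empty => e.elim) F := by
  induction F generalizing μ with
  | atom a => rfl
  | not F ih => simp [Formula.map, Formula.sem, ih]
  | and F G ihF ihG => simp [Formula.map, Formula.sem, ihF, ihG]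
  | box p F ih => exact p.elim
  | all v F ih =>
    simp only [Formula.map, Formula.sem, Set.mem_setOf_eq]
    constructor
    · intro h ν1 hν1
      have := h (μ.1, ν1) (by
        rintro (w | w) hw
        · rfl
        · simp only [hetVal]
          exact congrArg Sum.inr (hν1 w (by simpa using hw)))
      exact (ih _).1 this
    · intro h ν hν
      refine (ih ν).2 (h ν.2 ?_)
      intro w hw
      have := hν (Sum.inr w) (by simpa using hw)
      simpa [hetVal] using this

/-- Inheritance of inductive expressivity under heterogeneous
combination: if one component theory is inductively expressive, then there exists a
function `U2ℕ^het` on the combined universe making the simple heterogeneous theory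
inductively expressive with respect to the same variable set and the same witnessing
formulas (regarded as formulas of the combined theory); symmetrically for the other
component. -/
theorem heterogeneous_inductive_expressivity
    {V0 A0 P0 S0 U0 V1 A1 P1 S1 U1 Ac : Type*}
    (Δ0 : DynamicTheory V0 A0 P0 S0 U0) (Δ1 : DynamicTheory V1 A1 P1 S1 U1)
    (aEvalC : Ac → Set (S0 × S1)) (fvAC : Ac → Set (V0 ⊕ V1))
    (hCfin : ∀ a : Ac, (fvAC a).Finite)
    (hCover : ∀ (a : Ac) (μ ν : S0 × S1),
      (∀ v ∈ fvAC a, hetVal Δ0.val Δ1.val μ v = hetVal Δ0.val Δ1.val ν v) →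
      (μ ∈ aEvalC a ↔ ν ∈ aEvalC a)) :
    (∀ (u2n : U0 → ℕ) (Vnat : Set V0) (natPos : V0 → Formula V0 A0 Empty)
        (natEq natSucc : V0 → V0 → Formula V0 A0 Empty),
      (∀ v ∈ Vnat, ∀ n : ℕ, ∃ μ : S0, u2n (Δ0.val μ v) = n) →
      (∀ v ∈ Vnat, ∀ μ : S0,
        μ ∈ foSem Δ0.val Δ0.atomEval (natPos v) ↔ 0 < u2n (Δ0.val μ v)) →
      (∀ v ∈ Vnat, ∀ w ∈ Vnat, v ≠ w → ∀ μ : S0,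
        μ ∈ foSem Δ0.val Δ0.atomEval (natEq v w) ↔
          u2n (Δ0.val μ v) = u2n (Δ0.val μ w)) →
      (∀ v ∈ Vnat, ∀ w ∈ Vnat, v ≠ w → ∀ μ : S0,
        μ ∈ foSem Δ0.val Δ0.atomEval (natSucc v w) ↔
          u2n (Δ0.val μ v) + 1 = u2n (Δ0.val μ w)) →
      ∃ u2nH : U0 ⊕ U1 → ℕ,
        (∀ v ∈ Vnat, ∀ n : ℕ, ∃ μ : S0 × S1,
          u2nH (hetVal Δ0.val Δ1.val μ (Sum.inl v)) = n) ∧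
        (∀ v ∈ Vnat, ∀ μ : S0 × S1,
          μ ∈ foSem (hetVal Δ0.val Δ1.val)
              (hetAtomEval Δ0.atomEval Δ1.atomEval aEvalC)
              (Formula.map Sum.inl Sum.inl id (natPos v)) ↔
            0 < u2nH (hetVal Δ0.val Δ1.val μ (Sum.inl v))) ∧
        (∀ v ∈ Vnat, ∀ w ∈ Vnat, v ≠ w → ∀ μ : S0 × S1,
          μ ∈ foSem (hetVal Δ0.val Δ1.val)
              (hetAtomEval Δ0.atomEval Δ1.atomEval aEvalC)
              (Formula.map Sum.inl Sum.inl id (natEq v w)) ↔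
            u2nH (hetVal Δ0.val Δ1.val μ (Sum.inl v)) =
              u2nH (hetVal Δ0.val Δ1.val μ (Sum.inl w))) ∧
        (∀ v ∈ Vnat, ∀ w ∈ Vnat, v ≠ w → ∀ μ : S0 × S1,
          μ ∈ foSem (hetVal Δ0.val Δ1.val)
              (hetAtomEval Δ0.atomEval Δ1.atomEval aEvalC)
              (Formula.map Sum.inl Sum.inl id (natSucc v w)) ↔
            u2nH (hetVal Δ0.val Δ1.val μ (Sum.inl v)) + 1 =
              u2nH (hetVal Δ0.val Δ1.val μ (Sum.inl w)))) ∧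
    (∀ (u2n : U1 → ℕ) (Vnat : Set V1) (natPos : V1 → Formula V1 A1 Empty)
        (natEq natSucc : V1 → V1 → Formula V1 A1 Empty),
      (∀ v ∈ Vnat, ∀ n : ℕ, ∃ μ : S1, u2n (Δ1.val μ v) = n) →
      (∀ v ∈ Vnat, ∀ μ : S1,
        μ ∈ foSem Δ1.val Δ1.atomEval (natPos v) ↔ 0 < u2n (Δ1.val μ v)) →
      (∀ v ∈ Vnat, ∀ w ∈ Vnat, v ≠ w → ∀ μ : S1,
        μ ∈ foSem Δ1.val Δ1.atomEval (natEq v w) ↔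
          u2n (Δ1.val μ v) = u2n (Δ1.val μ w)) →
      (∀ v ∈ Vnat, ∀ w ∈ Vnat, v ≠ w → ∀ μ : S1,
        μ ∈ foSem Δ1.val Δ1.atomEval (natSucc v w) ↔
          u2n (Δ1.val μ v) + 1 = u2n (Δ1.val μ w)) →
      ∃ u2nH : U0 ⊕ U1 → ℕ,
        (∀ v ∈ Vnat, ∀ n : ℕ, ∃ μ : S0 × S1,
          u2nH (hetVal Δ0.val Δ1.val μ (Sum.inr v)) = n) ∧
        (∀ v ∈ Vnat, ∀ μ : S0 × S1,
          μ ∈ foSem (hetVal Δ0.val Δ1.val)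
              (hetAtomEval Δ0.atomEval Δ1.atomEval aEvalC)
              (Formula.map Sum.inr (fun a => Sum.inr (Sum.inl a)) id (natPos v)) ↔
            0 < u2nH (hetVal Δ0.val Δ1.val μ (Sum.inr v))) ∧
        (∀ v ∈ Vnat, ∀ w ∈ Vnat, v ≠ w → ∀ μ : S0 × S1,
          μ ∈ foSem (hetVal Δ0.val Δ1.val)
              (hetAtomEval Δ0.atomEval Δ1.atomEval aEvalC)
              (Formula.map Sum.inr (fun a => Sum.inr (Sum.inl a)) id (natEq v w)) ↔
            u2nH (hetVal Δ0.val Δ1.val μ (Sum.inr v)) =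
              u2nH (hetVal Δ0.val Δ1.val μ (Sum.inr w))) ∧
        (∀ v ∈ Vnat, ∀ w ∈ Vnat, v ≠ w → ∀ μ : S0 × S1,
          μ ∈ foSem (hetVal Δ0.val Δ1.val)
              (hetAtomEval Δ0.atomEval Δ1.atomEval aEvalC)
              (Formula.map Sum.inr (fun a => Sum.inr (Sum.inl a)) id (natSucc v w)) ↔
            u2nH (hetVal Δ0.val Δ1.val μ (Sum.inr v)) + 1 =
              u2nH (hetVal Δ0.val Δ1.val μ (Sum.inr w)))) := by
  constructor
  · intro u2n Vnat natPos natEq natSucc hExp hPos hEq hSucc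
    refine ⟨Sum.elim u2n (fun _ => 0), ?_, ?_, ?_, ?_⟩
    · intro v hv n
      obtain ⟨μ0, hμ0⟩ := hExp v hv n
      obtain ⟨μ1⟩ := Δ1.state_nonempty
      exact ⟨(μ0, μ1), hμ0⟩
    · intro v hv μ
      simpa [foSem, hetVal] using
        (hetSem_left Δ0.val Δ1.val Δ0.atomEval Δ1.atomEval aEvalC (natPos v) μ).trans
          (hPos v hv μ.1)
    · intro v hv w hw hvw μ
      simpa [foSem, hetVal] using
        (hetSem_left Δ0.val Δ1.val Δ0.atomEval Δ1.atomEval aEvalC (natEq v w) μ).trans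
          (hEq v hv w hw hvw μ.1)
    · intro v hv w hw hvw μ
      simpa [foSem, hetVal] using
        (hetSem_left Δ0.val Δ1.val Δ0.atomEval Δ1.atomEval aEvalC (natSucc v w) μ).trans
          (hSucc v hv w hw hvw μ.1)
  · intro u2n Vnat natPos natEq natSucc hExp hPos hEq hSucc
    refine ⟨Sum.elim (fun _ => 0) u2n, ?_, ?_, ?_, ?_⟩
    · intro v hv n
      obtain ⟨μ1, hμ1⟩ := hExp v hv n
      obtain ⟨μ0⟩ := Δ0.state_nonempty
      exact ⟨(μ0, μ1), hμ1⟩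
    · intro v hv μ
      simpa [foSem, hetVal] using
        (hetSem_right Δ0.val Δ1.val Δ0.atomEval Δ1.atomEval aEvalC (natPos v) μ).trans
          (hPos v hv μ.2)
    · intro v hv w hw hvw μ
      simpa [foSem, hetVal] using
        (hetSem_right Δ0.val Δ1.val Δ0.atomEval Δ1.atomEval aEvalC (natEq v w) μ).trans
          (hEq v hv w hw hvw μ.2)
    · intro v hv w hw hvw μ
      simpa [foSem, hetVal] using
        (hetSem_right Δ0.val Δ1.val Δ0.atomEval Δ1.atomEval aEvalC (natSucc v w) μ).trans
          (hSucc v hv w hw hvw μ.2)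
end

section
/- Expressibility of dynamic formulas as first-order formulas: let Δ be a dynamic theory that has finite support and is FOL expressive. Then for every Λ-formula F there exists a first-order (modality-free) Λ-formula F_FOL such that the formula F ↔ F_FOL is Δ-valid, i.e. ⟦F⟧ = ⟦F_FOL⟧. -/
section Aux

variable {V A P S U : Type*}

/-- Semantics of the embedding of FO formulas coincides with FO semantics. -/
lemma sem_embFO (val : S → V → U) (aEval : A → Set S) (pEval : P → Set (S × S)) :
    ∀ G : Formula V A Empty,
      Formula.sem val aEval pEval (embFO G) = foSem val aEval G := by
  intro G
  induction G with
  | atom a => rfl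
  | not F ih => simp [embFO, Formula.map, Formula.sem, foSem] at ih ⊢; rw [ih]
  | and F G ihF ihG =>
      simp [embFO, Formula.map, Formula.sem, foSem] at ihF ihG ⊢; rw [ihF, ihG]
  | all v F ih =>
      simp [embFO, Formula.map, Formula.sem, foSem] at ih ⊢; rw [ih]
  | box p F ih => exact p.elim

lemma mem_sem_imp {val : S → V → U} {aEval : A → Set S} {pEval : P → Set (S × S)}
    {F G : Formula V A P} {μ : S} :
    μ ∈ Formula.sem val aEval pEval (F.imp G) ↔
      (μ ∈ Formula.sem val aEval pEval F → μ ∈ Formula.sem val aEval pEval G) := by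
  simp [Formula.imp, Formula.sem]

/-- Syntactic free variables of an FO formula are finite. -/
lemma fvSyn_finite {fvA : A → Set V} (hA : ∀ a, (fvA a).Finite) :
    ∀ G : Formula V A Empty, (fvSyn fvA (fun e => e.elim) G).Finite := by
  intro G
  induction G with
  | atom a => exact hA a
  | not F ih => exact ih
  | and F G ihF ihG => exact ihF.union ihG
  | all v F ih => exact ih.diff
  | box p F ih => exact p.elim

/-- Coincidence lemma for FO formulas. -/
lemma fo_coincidence {val : S → V → U} {aEval : A → Set S} {fvA : A → Set V}
    (hInt : ∀ (μ ν : S) (W : Set V), ∃ ω : S,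
      (∀ v ∈ W, val ω v = val μ v) ∧ (∀ v ∉ W, val ω v = val ν v))
    (hA : ∀ (a : A) (μ ν : S),
      (∀ v ∈ fvA a, val μ v = val ν v) → (μ ∈ aEval a ↔ ν ∈ aEval a)) :
    ∀ (G : Formula V A Empty) (μ ν : S),
      (∀ v ∈ fvSyn fvA (fun e => e.elim) G, val μ v = val ν v) →
      μ ∈ foSem val aEval G → ν ∈ foSem val aEval G := by
  intro G
  induction G with
  | atom a => intro μ ν h hμ; exact (hA a μ ν h).mp hμ
  | not F ih =>
      intro μ ν h hμ hν
      exact hμ (ih ν μ (fun v hv => (h v hv).symm) hν)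
  | and F G ihF ihG =>
      intro μ ν h hμ
      exact ⟨ihF μ ν (fun v hv => h v (Or.inl hv)) hμ.1,
             ihG μ ν (fun v hv => h v (Or.inr hv)) hμ.2⟩
  | all v F ih =>
      intro μ ν h hμ ν' hν'
      obtain ⟨ω, hω1, hω2⟩ := hInt ν' μ {v}
      have hμω : ∀ w : V, w ≠ v → val μ w = val ω w := fun w hw =>
        (hω2 w (by simpa using hw)).symm
      have hωF : ω ∈ Formula.sem val aEval (fun e => e.elim) F := hμ ω hμω
      refine ih ω ν' ?_ hωF
      intro w hw
      by_cases hwv : w = v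
      · subst hwv; exact hω1 w rfl
      · calc val ω w = val μ w := hω2 w (by simpa using hwv)
          _ = val ν w := h w ⟨hw, hwv⟩
          _ = val ν' w := hν' w hwv
  | box p F ih => exact p.elim

/-- Iterated universal quantification. -/
def bigAll (l : List V) (G : Formula V A Empty) : Formula V A Empty :=
  l.foldr Formula.all G

lemma mem_bigAll {val : S → V → U} {aEval : A → Set S} {fvA : A → Set V}
    (hInt : ∀ (μ ν : S) (W : Set V), ∃ ω : S,
      (∀ v ∈ W, val ω v = val μ v) ∧ (∀ v ∉ W, val ω v = val ν v))
    (hA : ∀ (a : A) (μ ν : S),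
      (∀ v ∈ fvA a, val μ v = val ν v) → (μ ∈ aEval a ↔ ν ∈ aEval a)) :
    ∀ (l : List V) (G : Formula V A Empty) (μ : S),
      μ ∈ foSem val aEval (bigAll l G) ↔
        ∀ ν : S, (∀ w : V, w ∉ l → val μ w = val ν w) → ν ∈ foSem val aEval G := by
  intro l
  induction l with
  | nil =>
      intro G μ
      constructor
      · intro hμ ν hν
        exact fo_coincidence hInt hA G μ ν
          (fun v _ => hν v (by simp)) hμ
      · intro h; exact h μ (fun _ _ => rfl)
  | cons v rest ih =>
      intro G μ
      constructor
      · intro hμ ν hν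
        obtain ⟨ω, hω1, hω2⟩ := hInt ν μ {v}
        have hμω : ∀ w : V, w ≠ v → val μ w = val ω w := fun w hw =>
          (hω2 w (by simpa using hw)).symm
        have hωrest : ω ∈ foSem val aEval (bigAll rest G) := hμ ω hμω
        refine (ih G ω).mp hωrest ν ?_
        intro w hw
        by_cases hwv : w = v
        · subst hwv; exact hω1 w rfl
        · calc val ω w = val μ w := hω2 w (by simpa using hwv)
            _ = val ν w := hν w (by simp [hw, hwv])
      · intro h ω hω
        refine (ih G ω).mpr ?_
        intro ν' hν'
        refine h ν' ?_
        intro w hw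
        simp only [List.mem_cons, not_or] at hw
        calc val μ w = val ω w := hω w hw.1
          _ = val ν' w := hν' w hw.2

/-- Chain of equality-guarded implications. -/
def eqChain (eq : V → V → Formula V A Empty) (l : List (V × V))
    (G : Formula V A Empty) : Formula V A Empty :=
  l.foldr (fun q H => Formula.imp (eq q.1 q.2) H) G

lemma mem_eqChain {val : S → V → U} {aEval : A → Set S}
    {eq : V → V → Formula V A Empty}
    (heq : ∀ v w : V, TwinVars val v w →
      ∀ μ : S, μ ∈ foSem val aEval (eq v w) ↔ val μ v = val μ w) :
    ∀ (l : List (V × V)), (∀ q ∈ l, TwinVars val q.1 q.2) →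
      ∀ (G : Formula V A Empty) (μ : S),
        μ ∈ foSem val aEval (eqChain eq l G) ↔
          ((∀ q ∈ l, val μ q.1 = val μ q.2) → μ ∈ foSem val aEval G) := by
  intro l
  induction l with
  | nil => intro _ G μ; simp [eqChain]
  | cons q rest ih =>
      intro htw G μ
      have h1 : μ ∈ foSem val aEval (eqChain eq (q :: rest) G) ↔
          (μ ∈ foSem val aEval (eq q.1 q.2) →
            μ ∈ foSem val aEval (eqChain eq rest G)) := mem_sem_imp
      rw [h1, heq q.1 q.2 (htw q (by simp)) μ,
        ih (fun r hr => htw r (by simp [hr])) G μ]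
      constructor
      · intro h hall; exact h (hall q (by simp)) (fun r hr => hall r (by simp [hr]))
      · intro h h1 hall
        refine h ?_
        intro r hr
        rcases List.mem_cons.mp hr with rfl | hr'
        · exact h1
        · exact hall r hr'

/-- Multiple simultaneous reassignment of variables via interpolation. -/
lemma assignList {val : S → V → U}
    (hInt : ∀ (μ ν : S) (W : Set V), ∃ ω : S,
      (∀ v ∈ W, val ω v = val μ v) ∧ (∀ v ∉ W, val ω v = val ν v)) :
    ∀ l : List (V × U), (l.map Prod.fst).Nodup →
      (∀ q ∈ l, ∃ σ : S, val σ q.1 = q.2) → ∀ μ : S, ∃ ν : S,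
        (∀ q ∈ l, val ν q.1 = q.2) ∧
        ∀ v : V, (∀ q ∈ l, v ≠ q.1) → val ν v = val μ v := by
  intro l
  induction l with
  | nil => intro _ _ μ; exact ⟨μ, by simp, fun _ _ => rfl⟩
  | cons q rest ih =>
      intro hnd hval μ
      simp only [List.map_cons, List.nodup_cons] at hnd
      obtain ⟨ν', hν'1, hν'2⟩ := ih hnd.2 (fun r hr => hval r (by simp [hr])) μ
      obtain ⟨σ, hσ⟩ := hval q (by simp)
      obtain ⟨ω, hω1, hω2⟩ := hInt σ ν' {q.1}
      refine ⟨ω, ?_, ?_⟩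
      · intro r hrm
        rcases List.mem_cons.mp hrm with rfl | hr
        · rw [hω1 r.1 rfl, hσ]
        · have hne : r.1 ≠ q.1 := by
            intro hcon
            exact hnd.1 (hcon ▸ List.mem_map_of_mem (f := Prod.fst) hr)
          rw [hω2 r.1 (by simpa using hne), hν'1 r hr]
      · intro v hv
        have hne : v ≠ q.1 := hv q (by simp)
        rw [hω2 v (by simpa using hne), hν'2 v (fun r hr => hv r (by simp [hr]))]

/-- Existence of a fresh list of twin variables. -/
lemma freshTwins {val : S → V → U}
    (hTwin : ∀ v : V, {w : V | TwinVars val v w}.Infinite) :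
    ∀ (x : List V) (avoid : Set V), avoid.Finite →
      ∃ xp : List V, x.length = xp.length ∧
        (∀ q ∈ x.zip xp, TwinVars val q.1 q.2) ∧ xp.Nodup ∧
        ∀ w ∈ xp, w ∉ avoid := by
  intro x
  induction x with
  | nil => intro avoid _; exact ⟨[], rfl, by simp, by simp, by simp⟩
  | cons v rest ih =>
      intro avoid hfin
      obtain ⟨xp, hlen, htw, hnd, hav⟩ := ih avoid hfin
      obtain ⟨w, hw⟩ := ((hTwin v).diff (hfin.union xp.finite_toSet)).nonempty
      simp only [Set.mem_diff, Set.mem_setOf_eq, Set.mem_union, not_or] at hw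
      refine ⟨w :: xp, by simp [hlen], ?_, by simp [hnd, hw.2.2], ?_⟩
      · rintro q hq
        rcases (List.mem_cons).mp hq with rfl | hq'
        · exact hw.1
        · exact htw q hq'
      · rintro u hu
        rcases (List.mem_cons).mp hu with rfl | hu'
        · exact hw.2.1
        · exact hav u hu'

lemma mem_zip_left : ∀ {l₁ l₂ : List V}, l₁.length = l₂.length →
    ∀ v ∈ l₁, ∃ w : V, (v, w) ∈ l₁.zip l₂ := by
  intro l₁
  induction l₁ with
  | nil => intro l₂ _ v hv; simp at hv
  | cons a rest ih =>
      intro l₂ hlen v hv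
      cases l₂ with
      | nil => simp at hlen
      | cons b l₂' =>
          rcases (List.mem_cons).mp hv with rfl | hv'
          · exact ⟨b, by simp⟩
          · obtain ⟨w, hw⟩ := ih (by simpa using hlen) v hv'
            exact ⟨w, by simp [hw]⟩

/-- Semantic free variables of a program are contained in its syntactic
free-variable overapproximation. -/
lemma fvSemProg_subset (Δ : DynamicTheory V A P S U) (p : P) :
    fvSemProg Δ.val Δ.progEval p ⊆ Δ.fvP p := by
  intro v hv
  by_contra hvp
  obtain ⟨μ, μ', ν, hagree, hμν, hno⟩ := hv
  have hW : Δ.fvP p ⊆ {w : V | w ≠ v} := fun w hw => by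
    intro hcon; exact hvp (hcon ▸ hw)
  obtain ⟨ν', hν', hag⟩ := Δ.fvP_overapprox p {w : V | w ≠ v} hW μ μ' ν hagree hμν
  exact hno ⟨ν', hag, hν'⟩

/-- Non-semantically-bound variables are preserved by program transitions. -/
lemma notBv_preserved {val : S → V → U} {pEval : P → Set (S × S)} {p : P} {w : V}
    (hw : w ∉ bvSemProg val pEval p) {ν ρ : S} (h : (ν, ρ) ∈ pEval p) :
    val ν w = val ρ w := by
  by_contra hne
  exact hw ⟨ν, ρ, h, hne⟩

end Aux

/-- Expressibility of dynamic formulas as first-order formulas: in a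
dynamic theory with finite support that is FOL expressive, every formula `F` is
valid-equivalent to some first-order (modality-free) formula. -/
theorem dynamic_formula_fol_expressible
    {V A P S U : Type*} (Δ : DynamicTheory V A P S U)
    (bvP : P → Set V)
    (hBV : ∀ p : P, bvSemProg Δ.val Δ.progEval p ⊆ bvP p)
    (hBVfin : ∀ p : P, (bvP p).Finite)
    (eq : V → V → Formula V A Empty)
    (hFOL : FOLExpressive Δ.val Δ.atomEval Δ.progEval eq) :
    ∀ F : Formula V A P, ∃ G : Formula V A Empty,
      Formula.sem Δ.val Δ.atomEval Δ.progEval F =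
        Formula.sem Δ.val Δ.atomEval Δ.progEval (embFO G) := by
  classical
  intro F
  induction F with
  | atom a => exact ⟨Formula.atom a, rfl⟩
  | not F ih =>
      obtain ⟨G, hG⟩ := ih
      exact ⟨G.not, congrArg compl hG⟩
  | and F1 F2 ih1 ih2 =>
      obtain ⟨G1, hG1⟩ := ih1
      obtain ⟨G2, hG2⟩ := ih2
      exact ⟨G1.and G2, congrArg₂ (· ∩ ·) hG1 hG2⟩
  | all v F ih =>
      obtain ⟨G, hG⟩ := ih
      refine ⟨Formula.all v G, ?_⟩
      show {μ : S | ∀ ν : S, (∀ w : V, w ≠ v → Δ.val μ w = Δ.val ν w) →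
          ν ∈ Formula.sem Δ.val Δ.atomEval Δ.progEval F} = _
      rw [hG]; rfl
  | box p F ih =>
      obtain ⟨G, hG⟩ := ih
      have hInt := Δ.interpolation
      have hA := Δ.fvA_overapprox
      obtain ⟨hTwin, heq, hRend⟩ := hFOL
      have hFG : Formula.sem Δ.val Δ.atomEval Δ.progEval F =
          foSem Δ.val Δ.atomEval G := hG.trans (sem_embFO _ _ _ G)
      have hXfin : (Δ.fvP p ∪ bvP p ∪ fvSyn Δ.fvA (fun e => e.elim) G).Finite :=
        ((Δ.fvP_finite p).union (hBVfin p)).union (fvSyn_finite Δ.fvA_finite G)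
      set x : List V := hXfin.toFinset.toList with hxdef
      have hx_mem : ∀ v : V,
          v ∈ x ↔ v ∈ Δ.fvP p ∪ bvP p ∪ fvSyn Δ.fvA (fun e => e.elim) G := by
        intro v; rw [hxdef, Finset.mem_toList, Set.Finite.mem_toFinset]
      have hx_nd : x.Nodup := Finset.nodup_toList _
      obtain ⟨xp, hlen, htw, hxp_nd, hxp_fresh⟩ :=
        freshTwins hTwin x {v : V | v ∈ x} x.finite_toSet
      have hdisj : ∀ v ∈ x, v ∉ xp := fun v hv hvp => hxp_fresh v hvp hv
      have hcover : fvSemProg Δ.val Δ.progEval p ∪ bvSemProg Δ.val Δ.progEval p ⊆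
          {v : V | v ∈ x} := by
        intro v hv
        rw [Set.mem_setOf_eq, hx_mem]
        rcases hv with hv | hv
        · exact Or.inl (Or.inl (fvSemProg_subset Δ p hv))
        · exact Or.inl (Or.inr (hBV p hv))
      obtain ⟨Sp, hSp⟩ := hRend p x xp ⟨hlen, htw⟩ hx_nd hxp_nd hcover hdisj
      have hnotbv : ∀ w : V, w ∉ x → w ∉ bvSemProg Δ.val Δ.progEval p :=
        fun w hw hb => hw ((hx_mem w).mpr (Or.inl (Or.inr (hBV p hb))))
      have hfvg_x : ∀ w ∈ fvSyn Δ.fvA (fun e => e.elim) G, w ∈ x :=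
        fun w hw => (hx_mem w).mpr (Or.inr hw)
      have htrans : ∀ μ ν ρ : S, (∀ w : V, w ∉ xp → Δ.val μ w = Δ.val ν w) →
          (μ, ρ) ∈ Δ.progEval p →
          ∃ ρ' : S, (ν, ρ') ∈ Δ.progEval p ∧
            ∀ w : V, w ∉ xp → Δ.val ρ w = Δ.val ρ' w := by
        intro μ ν ρ hag hμρ
        have hWsub : Δ.fvP p ⊆ {w : V | w ∉ xp} := by
          intro w hw hwp
          exact hxp_fresh w hwp ((hx_mem w).mpr (Or.inl (Or.inl hw)))
        exact Δ.fvP_overapprox p {w : V | w ∉ xp} hWsub μ ν ρ hag hμρ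
      refine ⟨bigAll xp (Formula.imp Sp (bigAll x (eqChain eq (x.zip xp) G))), ?_⟩
      rw [sem_embFO]
      ext μ
      constructor
      · intro hbox
        refine (mem_bigAll hInt hA xp _ μ).mpr ?_
        intro ν hν
        refine mem_sem_imp.mpr ?_
        intro hSpν
        obtain ⟨ρ', hρ', hmatch⟩ := (hSp ν).mp hSpν
        obtain ⟨ρ, hρ, hρag⟩ := htrans ν μ ρ' (fun w hw => (hν w hw).symm) hρ'
        have hρG : ρ ∈ foSem Δ.val Δ.atomEval G := by
          have hmem : ρ ∈ Formula.sem Δ.val Δ.atomEval Δ.progEval F := hbox ρ hρ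
          rwa [hFG] at hmem
        refine (mem_bigAll hInt hA x _ ν).mpr ?_
        intro ω hω
        refine (mem_eqChain heq (x.zip xp) htw G ω).mpr ?_
        intro heqs
        refine fo_coincidence hInt hA G ρ ω ?_ hρG
        intro w hw
        have hwx : w ∈ x := hfvg_x w hw
        obtain ⟨wp, hwp⟩ := mem_zip_left hlen w hwx
        have hwpxp : wp ∈ xp := (List.of_mem_zip hwp).2
        have hwpx : wp ∉ x := fun hc => hdisj wp hc hwpxp
        have hwxp : w ∉ xp := fun hc => hdisj w hwx hc
        calc Δ.val ρ w = Δ.val ρ' w := (hρag w hwxp).symm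
          _ = Δ.val ρ' wp := hmatch (w, wp) hwp
          _ = Δ.val ν wp := (notBv_preserved (hnotbv wp hwpx) hρ').symm
          _ = Δ.val ω wp := hω wp hwpx
          _ = Δ.val ω w := (heqs (w, wp) hwp).symm
      · intro hH ρ hρ
        rw [hFG]
        set l : List (V × U) := xp.zip (x.map (Δ.val ρ)) with hl
        have hkeys : l.map Prod.fst = xp :=
          List.map_fst_zip (by simp [hlen])
        have hlmem : ∀ q ∈ l, ∃ r ∈ xp.zip x, q = (r.1, Δ.val ρ r.2) := by
          intro q hq
          rw [hl, List.zip_map_right] at hq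
          obtain ⟨r, hr, hrq⟩ := List.mem_map.mp hq
          exact ⟨r, hr, by simpa [Prod.map] using hrq.symm⟩
        have hval_l : ∀ q ∈ l, ∃ σ : S, Δ.val σ q.1 = q.2 := by
          intro q hq
          obtain ⟨r, hr, rfl⟩ := hlmem q hq
          have hsw : (r.2, r.1) ∈ x.zip xp := by
            have hm := List.mem_map_of_mem (f := Prod.swap) hr
            rwa [List.zip_swap] at hm
          have htwr := htw (r.2, r.1) hsw
          have hmem : Δ.val ρ r.2 ∈ valueSet Δ.val r.1 := by
            rw [← htwr]; exact ⟨ρ, rfl⟩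
          exact hmem
        have hnd_l : (l.map Prod.fst).Nodup := by rw [hkeys]; exact hxp_nd
        obtain ⟨ν, hν1, hν2⟩ := assignList hInt l hnd_l hval_l μ
        have hν1' : ∀ q ∈ x.zip xp, Δ.val ν q.2 = Δ.val ρ q.1 := by
          intro q hq
          have hsw : (q.2, q.1) ∈ xp.zip x := by
            have hm := List.mem_map_of_mem (f := Prod.swap) hq
            rwa [List.zip_swap] at hm
          have hinl : (q.2, Δ.val ρ q.1) ∈ l := by
            rw [hl, List.zip_map_right]
            exact List.mem_map.mpr ⟨(q.2, q.1), hsw, rfl⟩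
          exact hν1 _ hinl
        have hν2' : ∀ w : V, w ∉ xp → Δ.val ν w = Δ.val μ w := by
          intro w hw
          refine hν2 w ?_
          intro q hq hcon
          apply hw
          have hm : q.1 ∈ l.map Prod.fst := List.mem_map_of_mem (f := Prod.fst) hq
          rw [hkeys] at hm
          exact hcon ▸ hm
        have hH1 := (mem_bigAll hInt hA xp _ μ).mp hH ν
          (fun w hw => (hν2' w hw).symm)
        have hH2 := mem_sem_imp.mp hH1
        obtain ⟨ρ', hρ'1, hρ'2⟩ := htrans μ ν ρ (fun w hw => (hν2' w hw).symm) hρ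
        have hmatch' : ∀ q ∈ x.zip xp, Δ.val ρ' q.1 = Δ.val ρ' q.2 := by
          intro q hq
          have hq1x : q.1 ∈ x := (List.of_mem_zip hq).1
          have hq2xp : q.2 ∈ xp := (List.of_mem_zip hq).2
          have hq1 : q.1 ∉ xp := fun hc => hdisj q.1 hq1x hc
          have hq2x : q.2 ∉ x := fun hc => hdisj q.2 hc hq2xp
          calc Δ.val ρ' q.1 = Δ.val ρ q.1 := (hρ'2 q.1 hq1).symm
            _ = Δ.val ν q.2 := (hν1' q hq).symm
            _ = Δ.val ρ' q.2 := notBv_preserved (hnotbv q.2 hq2x) hρ'1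
        have hSpν : ν ∈ foSem Δ.val Δ.atomEval Sp :=
          (hSp ν).mpr ⟨ρ', hρ'1, hmatch'⟩
        have hνρ' : ∀ w : V, w ∉ x → Δ.val ν w = Δ.val ρ' w := by
          intro w hw
          by_cases hwp : w ∈ xp
          · exact notBv_preserved (hnotbv w hw) hρ'1
          · calc Δ.val ν w = Δ.val μ w := hν2' w hwp
              _ = Δ.val ρ w := notBv_preserved (hnotbv w hw) hρ
              _ = Δ.val ρ' w := hρ'2 w hwp
        have hH3 := (mem_bigAll hInt hA x _ ν).mp (hH2 hSpν) ρ' hνρ'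
        have hρ'G := (mem_eqChain heq (x.zip xp) htw G ρ').mp hH3 hmatch'
        refine fo_coincidence hInt hA G ρ' ρ ?_ hρ'G
        intro w hw
        have hwx : w ∈ x := hfvg_x w hw
        exact (hρ'2 w (fun hc => hdisj w hwx hc)).symm
end

section
/- Finite support of the regular closure: let Δ be a dynamic theory with finite support witnessed by BV_P, and define BV_P^reg on P^reg by BV_P^reg(r) = BV_P(r) for r ∈ P, BV_P^reg(p;q) = BV_P^reg(p ∪ q) = BV_P^reg(p) ∪ BV_P^reg(q), BV_P^reg(?(F)) = ∅, and BV_P^reg(p*) = BV_P^reg(p). Then for every program p ∈ P^reg of the regular closure Δ^reg, the set BV_P^reg(p) is finite and contains the semantically bound variables: BV^sem(p) ⊆ BV_P^reg(p); hence Δ^reg has finite support. -/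
/-- Finite support of the regular closure: if `Δ` has finite support
witnessed by `bvP`, then the recursively defined `regBvP` is finite and overapproximates
the semantically bound variables of every regular program; hence `Δ^reg` has finite
support. -/
theorem regular_closure_finite_support
    {V A P S U : Type*} (Δ : DynamicTheory V A P S U)
    (bvP : P → Set V)
    (hBV : ∀ r : P, bvSemProg Δ.val Δ.progEval r ⊆ bvP r)
    (hBVfin : ∀ r : P, (bvP r).Finite) :
    ∀ p : RegProg V A P,
      (regBvP bvP p).Finite ∧
      bvSemProg Δ.val (regProgEval Δ.val Δ.atomEval Δ.progEval) p ⊆ regBvP bvP p := by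
  intro p
  induction p with
  | base r => exact ⟨hBVfin r, hBV r⟩
  | seq p q ihp ihq =>
    refine ⟨ihp.1.union ihq.1, ?_⟩
    rintro v ⟨μ, μ', ⟨ν, h1, h2⟩, hne⟩
    by_cases hv : Δ.val μ v = Δ.val ν v
    · exact Or.inr (ihq.2 ⟨ν, μ', h2, fun h => hne (hv.trans h)⟩)
    · exact Or.inl (ihp.2 ⟨μ, ν, h1, hv⟩)
  | choice p q ihp ihq =>
    refine ⟨ihp.1.union ihq.1, ?_⟩
    rintro v ⟨μ, μ', (h | h), hne⟩
    · exact Or.inl (ihp.2 ⟨μ, μ', h, hne⟩)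
    · exact Or.inr (ihq.2 ⟨μ, μ', h, hne⟩)
  | test F =>
    refine ⟨Set.finite_empty, ?_⟩
    rintro v ⟨μ, μ', ⟨_, hall⟩, hne⟩
    exact absurd (hall v) hne
  | star p ih =>
    refine ⟨ih.1, ?_⟩
    rintro v ⟨μ, μ', hmem, hne⟩
    simp only [regProgEval, Set.mem_iUnion] at hmem
    obtain ⟨n, hn⟩ := hmem
    show v ∈ regBvP bvP p
    induction n generalizing μ with
    | zero => exact absurd (hn v) hne
    | succ m ihm =>
      obtain ⟨ν, h1, h2⟩ := hn
      by_cases hv : Δ.val μ v = Δ.val ν v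
      · exact ihm ν (fun h => hne (hv.trans h)) h2
      · exact ih.2 ⟨μ, ν, h1, hv⟩
end

section
/- FOL expressiveness is preserved by havoc lifting: if a dynamic theory Δ is FOL expressive, then its havoc lift Δ^{:=*} is FOL expressive; in particular, for the havoc program w := * and twin variable vectors x ⊇ {w}, x⁺ with x ∩ x⁺ = ∅, the first-order formula ⋀_{v ∈ x, v ≠ w} (v ≐ v⁺) is a rendition of w := *, i.e. it is valid-equivalent in Δ^{:=*} to ⟨w := *⟩(x ≐ x⁺). -/
section AuxHavoc

variable {V A P S U : Type*}

lemma havoc_sem_foldr_and (val : S → V → U) (aEval : A → Set S) (pEval : P → Set (S × S))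
    (base : Formula V A P) (l : List (Formula V A P)) (μ : S) :
    μ ∈ Formula.sem val aEval pEval (l.foldr .and base) ↔
      μ ∈ Formula.sem val aEval pEval base ∧
        ∀ F ∈ l, μ ∈ Formula.sem val aEval pEval F := by
  induction l with
  | nil => simp
  | cons F l ih =>
    simp only [List.foldr_cons, List.mem_cons, Formula.sem, Set.mem_inter_iff, ih]
    constructor
    · rintro ⟨hF, hb, hl⟩
      exact ⟨hb, fun G hG => hG.elim (fun h => h ▸ hF) (hl G)⟩
    · rintro ⟨hb, hl⟩
      exact ⟨hl F (Or.inl rfl), hb, fun G hG => hl G (Or.inr hG)⟩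

lemma havoc_zip_partner {x xp : List V} (h : x.length = xp.length) {w : V} (hw : w ∈ x) :
    ∃ wp, (w, wp) ∈ x.zip xp := by
  induction x generalizing xp with
  | nil => simp at hw
  | cons a x ih =>
    cases xp with
    | nil => simp at h
    | cons b xp =>
      rcases List.mem_cons.mp hw with rfl | hw
      · exact ⟨b, by simp⟩
      · obtain ⟨wp, hwp⟩ := ih (by simpa using h) hw
        exact ⟨wp, by simp [hwp]⟩

lemma havoc_zip_unique {x xp : List V} (hnd : x.Nodup) {w b c : V}
    (hb : (w, b) ∈ x.zip xp) (hc : (w, c) ∈ x.zip xp) : b = c := by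
  induction x generalizing xp with
  | nil => simp at hb
  | cons a x ih =>
    cases xp with
    | nil => simp at hb
    | cons d xp =>
      simp only [List.zip_cons_cons, List.mem_cons, Prod.mk.injEq] at hb hc
      rcases hb with ⟨hw, rfl⟩ | hb <;> rcases hc with ⟨hw', rfl⟩ | hc
      · rfl
      · exact absurd (hw ▸ (List.of_mem_zip hc).1) (List.nodup_cons.mp hnd).1
      · exact absurd (hw' ▸ (List.of_mem_zip hb).1) (List.nodup_cons.mp hnd).1
      · exact ih (List.nodup_cons.mp hnd).2 hb hc

lemma havoc_key (Δ : DynamicTheory V A P S U)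
    (w : V) (x xp : List V) (ht : TwinLists Δ.val x xp) (hnd : x.Nodup)
    (hdisj : ∀ v ∈ x, v ∉ xp) (hw : w ∈ x) (μ : S) :
    (∀ q ∈ x.zip xp, q.1 ≠ w → Δ.val μ q.1 = Δ.val μ q.2) ↔
      ∃ ν : S, (μ, ν) ∈ havocProgEval Δ.val Δ.progEval (Sum.inr w) ∧
        ∀ q ∈ x.zip xp, Δ.val ν q.1 = Δ.val ν q.2 := by
  constructor
  · intro hμ
    obtain ⟨wp, hwp⟩ := havoc_zip_partner ht.1 hw
    have hwpxp : wp ∈ xp := (List.of_mem_zip hwp).2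
    have hwpw : wp ≠ w := fun h => hdisj w hw (h ▸ hwpxp)
    have htw : TwinVars Δ.val w wp := ht.2 _ hwp
    have hval : Δ.val μ wp ∈ valueSet Δ.val w := by
      rw [htw]; exact ⟨μ, rfl⟩
    obtain ⟨σ, hσ⟩ := hval
    obtain ⟨ν, hν1, hν2⟩ := Δ.interpolation σ μ {w}
    have hν2' : ∀ u : V, u ≠ w → Δ.val ν u = Δ.val μ u := fun u hu => hν2 u hu
    refine ⟨ν, fun u hu => (hν2' u hu).symm, ?_⟩
    rintro ⟨a, b⟩ hq
    by_cases ha : a = w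
    · have hb : b = wp := havoc_zip_unique hnd (ha ▸ hq) hwp
      rw [ha, hb, hν1 w rfl, hσ, hν2' wp hwpw]
    · have hbxp : b ∈ xp := (List.of_mem_zip hq).2
      have hbw : b ≠ w := fun h => hdisj w hw (h ▸ hbxp)
      rw [hν2' a ha, hν2' b hbw]
      exact hμ (a, b) hq ha
  · rintro ⟨ν, hν, heq⟩ ⟨a, b⟩ hq ha
    have hbxp : b ∈ xp := (List.of_mem_zip hq).2
    have hbw : b ≠ w := fun h => hdisj w hw (h ▸ hbxp)
    rw [hν a ha, hν b hbw]
    exact heq (a, b) hq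

end AuxHavoc

/-- FOL expressiveness is preserved by havoc lifting: if `Δ` is FOL
expressive then so is its havoc lift `Δ^{:=*}`; in particular, for the havoc program
`w := *` and disjoint twin variable vectors `x ⊇ {w}`, `x⁺`, the conjunction
`⋀_{v ∈ x, v ≠ w} (v ≐ v⁺)` is a rendition of `w := *`, i.e. it is valid-equivalent to
`⟨w := *⟩(x ≐ x⁺)` (stated semantically via the soundness of `≐`). -/
theorem havoc_lift_fol_expressive
    {V A P S U : Type*} (Δ : DynamicTheory V A P S U)
    (eq : V → V → Formula V A Empty)
    (hFOL : FOLExpressive Δ.val Δ.atomEval Δ.progEval eq) :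
    FOLExpressive Δ.val Δ.atomEval (havocProgEval Δ.val Δ.progEval) eq ∧
    (∀ (w : V) (x xp : List V), TwinLists Δ.val x xp → x.Nodup → xp.Nodup →
      w ∈ x → (∀ v ∈ x, v ∉ xp) →
      ∀ μ : S,
        (∀ q ∈ x.zip xp, q.1 ≠ w → Δ.val μ q.1 = Δ.val μ q.2) ↔
          ∃ ν : S, (μ, ν) ∈ havocProgEval Δ.val Δ.progEval (Sum.inr w) ∧
            ∀ q ∈ x.zip xp, Δ.val ν q.1 = Δ.val ν q.2) := by
  classical
  obtain ⟨h1, h2, h3⟩ := hFOL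
  refine ⟨⟨h1, h2, ?_⟩, fun w x xp ht hnx hnxp hw hdisj μ =>
    havoc_key Δ w x xp ht hnx hdisj hw μ⟩
  rintro (p | w) x xp ht hnx hnxp hsub hdisj
  · exact h3 p x xp ht hnx hnxp hsub hdisj
  · refine ⟨(((x.zip xp).filter (fun q => q.1 ≠ w)).map
      (fun q => eq q.1 q.2)).foldr .and (eq w w), fun μ => ?_⟩
    have hsem : μ ∈ foSem Δ.val Δ.atomEval
        ((((x.zip xp).filter (fun q => q.1 ≠ w)).map
          (fun q => eq q.1 q.2)).foldr .and (eq w w)) ↔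
        ∀ q ∈ x.zip xp, q.1 ≠ w → Δ.val μ q.1 = Δ.val μ q.2 := by
      rw [foSem, havoc_sem_foldr_and]
      have hww : μ ∈ foSem Δ.val Δ.atomEval (eq w w) := (h2 w w rfl μ).mpr rfl
      simp only [List.mem_map, List.mem_filter, decide_eq_true_eq]
      constructor
      · rintro ⟨-, hall⟩ q hq hq1
        exact (h2 q.1 q.2 (ht.2 q hq) μ).mp (hall _ ⟨q, ⟨hq, hq1⟩, rfl⟩)
      · intro hall
        refine ⟨hww, ?_⟩
        rintro F ⟨q, ⟨hq, hq1⟩, rfl⟩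
        exact (h2 q.1 q.2 (ht.2 q hq) μ).mpr (hall q hq hq1)
    rw [hsem]
    by_cases hwx : w ∈ x
    · exact havoc_key Δ w x xp ht hnx hdisj hwx μ
    · constructor
      · intro h
        exact ⟨μ, fun u _ => rfl, fun q hq =>
          h q hq (fun e => hwx (e ▸ (List.of_mem_zip hq).1))⟩
      · rintro ⟨ν, hν, heq⟩ q hq hq1
        have hwb : w ∉ bvSemProg Δ.val (havocProgEval Δ.val Δ.progEval) (Sum.inr w) :=
          fun h => hwx (hsub (Set.mem_union_right _ h))
        have hall : ∀ u : V, Δ.val μ u = Δ.val ν u := by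
          intro u
          by_cases hu : u = w
          · subst hu
            by_contra hne
            exact hwb ⟨μ, ν, hν, hne⟩
          · exact hν u hu
        rw [hall q.1, hall q.2]
        exact heq q hq
end
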